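/- arXiv:1809.08389 — 4 statements merged into one kernel-verified Lean document; each statement's English description precedes it below -/
import Mathlib

section
/- For every integer m ≥ 0 and every element w of 𝔥y, one has (σ_m − τσ_mτ)(xw) = x·(σ_m − α̃σ_mα̃)(w); that is, the operator identity (σ_m − τσ_mτ)L_x = L_x(σ_m − α̃σ_mα̃) holds on 𝔥y. (This identity is the content of the equivalence between the derivation relations and the Ohno type relations.) -/
noncomputable section

namespace FMZVNote

/-- The noncommutative polynomial ring `𝔥 = ℚ⟨x,y⟩` in two indeterminates `x`, `y`. -/
abbrev H : Type := FreeAlgebra ℚ (Fin 2)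

/-- The generator `x`. -/
def x : H := FreeAlgebra.ι ℚ 0

/-- The generator `y`. -/
def y : H := FreeAlgebra.ι ℚ 1

/-- `z = x + y`. -/
def z : H := x + y

/-- `z_k = x^{k-1} y`. -/
def zk (k : ℕ) : H := x ^ (k - 1) * y

/-- The word `z_{k_1} ⋯ z_{k_r}` associated to an index `(k_1, …, k_r)`. -/
def zword (ks : List ℕ) : H := (ks.map zk).prod

/-- The index `(k_1+e_1, …, k_r+e_r)`. -/
def addE (k : List ℕ) (e : Fin k.length → ℕ) : List ℕ :=
  List.ofFn fun i => k.get i + e i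

/-- The automorphism `α` of `𝔥` interchanging `x` and `y`. -/
def alphaHom : H →ₐ[ℚ] H := FreeAlgebra.lift ℚ ![y, x]

/-!
Realise `σ` as the algebra homomorphism `sigmaHat : 𝔥 → 𝔥⟦X⟧`, `x ↦ x`, `y ↦ (1 - xX)⁻¹ y`;
on `𝔥y`, which is spanned by the words `z_{k_1} ⋯ z_{k_r}`, the coefficient of `X ^ m` is `σ_m`.
Conjugating by the anti-automorphism `τ`, resp. by `α`, gives the homomorphisms
`x ↦ x (1 - yX)⁻¹, y ↦ y` and `x ↦ (1 - yX)⁻¹ x, y ↦ y`, which are intertwined by `(1 - yX)⁻¹`.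
Hence `τστ(x v y) = x (1 - yX)⁻¹ τστ(v) y = x · ασα(v) (1 - yX)⁻¹ · y`, while
`α̃σα̃(v y) = α(σ(α v) (1 - xX)⁻¹) y = ασα(v) (1 - yX)⁻¹ · y` and `σ(x v y) = x σ(v y)`.
-/

open PowerSeries Finset.Nat Finset.HasAntidiagonal

section PowerSeries

variable {R : Type*} [Semiring R]

lemma sum_antidiagonalTuple_succ {M : Type*} [AddCommMonoid M] (k n : ℕ)
    (f : (Fin (k + 1) → ℕ) → M) :
    ∑ e ∈ antidiagonalTuple (k + 1) n, f e
      = ∑ p ∈ antidiagonal n, ∑ e ∈ antidiagonalTuple k p.2, f (Fin.cons p.1 e) := by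
  rw [Finset.sum_sigma']
  refine Finset.sum_nbij' (fun e => ⟨(e 0, ∑ i : Fin k, e i.succ), Fin.tail e⟩)
    (fun q => Fin.cons q.1.1 q.2) ?_ ?_ (fun e _ => Fin.cons_self_tail e) ?_
    (fun e _ => by rw [Fin.cons_self_tail])
  · intro e he
    rw [mem_antidiagonalTuple, Fin.sum_univ_succ] at he
    simp [Finset.mem_sigma, mem_antidiagonal, he, mem_antidiagonalTuple, Fin.tail]
  · rintro ⟨p, e⟩ hq
    simp only [Finset.mem_sigma, mem_antidiagonal, mem_antidiagonalTuple] at hq ⊢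
    rw [Fin.sum_cons, hq.2, hq.1]
  · rintro ⟨p, e⟩ hq
    simp only [Finset.mem_sigma, mem_antidiagonalTuple] at hq
    simp [hq.2]

theorem coeff_prod_ofFn {k : ℕ} (f : Fin k → R⟦X⟧) (n : ℕ) :
    coeff n (List.ofFn f).prod
      = ∑ e ∈ antidiagonalTuple k n, (List.ofFn fun i => coeff (e i) (f i)).prod := by
  induction k generalizing n with
  | zero =>
    cases n <;> simp [antidiagonalTuple_zero_zero, antidiagonalTuple_zero_succ, coeff_one]
  | succ k ih =>
    simp only [List.ofFn_succ, List.prod_cons, coeff_mul, ih, Finset.mul_sum,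
      sum_antidiagonalTuple_succ, Fin.cons_zero, Fin.cons_succ]

def geomSeries (a : R) : R⟦X⟧ := mk fun j => a ^ j

lemma C_mul_geomSeries_self (a : R) : C a * geomSeries a = geomSeries a * C a := by
  ext n
  simp [geomSeries, coeff_C_mul, coeff_mul_C, pow_mul_comm']

lemma map_geomSeries {S : Type*} [Semiring S] (f : R →+* S) (a : R) :
    map f (geomSeries a) = geomSeries (f a) := by
  ext n
  simp [geomSeries]

def mapCoeffs (f : R →+ R) (φ : R⟦X⟧) : R⟦X⟧ := mk fun n => f (coeff n φ)

@[simp]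
lemma coeff_mapCoeffs (f : R →+ R) (φ : R⟦X⟧) (n : ℕ) : coeff n (mapCoeffs f φ) = f (coeff n φ) :=
  coeff_mk _ _

lemma mapCoeffs_add (f : R →+ R) (φ ψ : R⟦X⟧) :
    mapCoeffs f (φ + ψ) = mapCoeffs f φ + mapCoeffs f ψ := by
  ext n
  simp

lemma mapCoeffs_C (f : R →+ R) (a : R) : mapCoeffs f (C a) = C (f a) := by
  ext n
  simp [coeff_C, apply_ite f]

lemma mapCoeffs_mul {f : R →+ R} (hf : ∀ a b, f (a * b) = f b * f a) (φ ψ : R⟦X⟧) :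
    mapCoeffs f (φ * ψ) = mapCoeffs f ψ * mapCoeffs f φ := by
  ext n
  simp only [coeff_mapCoeffs, coeff_mul, map_sum, hf]
  exact sum_antidiagonal_swap (f := fun p => f (coeff p.1 ψ) * f (coeff p.2 φ))

lemma mapCoeffs_geomSeries {f : R →+ R} (hf₁ : f 1 = 1) (hf : ∀ a b, f (a * b) = f b * f a)
    (a : R) : mapCoeffs f (geomSeries a) = geomSeries (f a) := by
  have hpow : ∀ j : ℕ, f (a ^ j) = f a ^ j := by
    intro j
    induction j with
    | zero => simpa using hf₁
    | succ j ih => rw [pow_succ, hf, ih, pow_succ']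
  ext n
  simp [geomSeries, hpow]

end PowerSeries

@[elab_as_elim]
theorem H.induction {motive : H → Prop} (algebraMap : ∀ r : ℚ, motive (algebraMap ℚ H r))
    (of_x : motive x) (of_y : motive y) (mul : ∀ a b, motive a → motive b → motive (a * b))
    (add : ∀ a b, motive a → motive b → motive (a + b)) (a : H) : motive a := by
  induction a using FreeAlgebra.induction with
  | grade0 r => exact algebraMap r
  | grade1 i => fin_cases i; exacts [of_x, of_y]
  | mul a b ha hb => exact mul a b ha hb
  | add a b ha hb => exact add a b ha hb

lemma alphaHom_x : alphaHom x = y := by simp [alphaHom, x]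

lemma alphaHom_y : alphaHom y = x := by simp [alphaHom, y]

def sigmaHat : H →ₐ[ℚ] H⟦X⟧ := FreeAlgebra.lift ℚ ![C x, geomSeries x * C y]

def tauSigmaTau : H →ₐ[ℚ] H⟦X⟧ := FreeAlgebra.lift ℚ ![C x * geomSeries y, C y]

def alphaSigmaAlpha : H →ₐ[ℚ] H⟦X⟧ := FreeAlgebra.lift ℚ ![geomSeries y * C x, C y]

@[simp] lemma sigmaHat_x : sigmaHat x = C x := by simp [sigmaHat, x]
@[simp] lemma sigmaHat_y : sigmaHat y = geomSeries x * C y := by simp [sigmaHat, y]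
@[simp] lemma tauSigmaTau_x : tauSigmaTau x = C x * geomSeries y := by simp [tauSigmaTau, x]
@[simp] lemma tauSigmaTau_y : tauSigmaTau y = C y := by simp [tauSigmaTau, y]
@[simp] lemma alphaSigmaAlpha_x : alphaSigmaAlpha x = geomSeries y * C x := by
  simp [alphaSigmaAlpha, x]
@[simp] lemma alphaSigmaAlpha_y : alphaSigmaAlpha y = C y := by simp [alphaSigmaAlpha, y]

lemma geomSeries_y_mul_tauSigmaTau (v : H) :
    geomSeries y * tauSigmaTau v = alphaSigmaAlpha v * geomSeries y := by
  induction v using H.induction with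
  | algebraMap r => simp only [AlgHom.commutes, Algebra.commutes]
  | of_x => simp [mul_assoc]
  | of_y => simp [C_mul_geomSeries_self]
  | mul a b ha hb => rw [map_mul, map_mul, ← mul_assoc, ha, mul_assoc, hb, mul_assoc]
  | add a b ha hb => rw [map_add, map_add, mul_add, add_mul, ha, hb]

lemma map_alphaHom_sigmaHat_alphaHom (v : H) :
    map (alphaHom : H →+* H) (sigmaHat (alphaHom v)) = alphaSigmaAlpha v := by
  suffices (mapAlgHom alphaHom).comp (sigmaHat.comp alphaHom) = alphaSigmaAlpha from
    DFunLike.congr_fun this v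
  refine FreeAlgebra.hom_ext (funext fun i => ?_)
  fin_cases i
  · change mapAlgHom alphaHom (sigmaHat (alphaHom x)) = alphaSigmaAlpha x
    simp [mapAlgHom_apply, map_geomSeries, alphaHom_x, alphaHom_y]
  · change mapAlgHom alphaHom (sigmaHat (alphaHom y)) = alphaSigmaAlpha y
    simp [mapAlgHom_apply, alphaHom_x, alphaHom_y]

lemma mapCoeffs_sigmaHat_tau (tau : H →ₗ[ℚ] H) (htauone : tau 1 = 1)
    (htaumul : ∀ a b : H, tau (a * b) = tau b * tau a)
    (htaux : tau x = y) (htauy : tau y = x) (v : H) :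
    mapCoeffs (tau : H →+ H) (sigmaHat (tau v)) = tauSigmaTau v := by
  induction v using H.induction with
  | algebraMap r =>
    have hr : tau (algebraMap ℚ H r) = algebraMap ℚ H r := by
      rw [Algebra.algebraMap_eq_smul_one, map_smul, htauone]
    rw [hr, AlgHom.commutes, AlgHom.commutes, PowerSeries.algebraMap_apply, mapCoeffs_C,
      AddMonoidHom.coe_coe, hr]
  | of_x =>
    rw [htaux, sigmaHat_y, mapCoeffs_mul htaumul, mapCoeffs_C, mapCoeffs_geomSeries htauone htaumul,
      tauSigmaTau_x, AddMonoidHom.coe_coe, htaux, htauy]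
  | of_y => rw [htauy, sigmaHat_x, mapCoeffs_C, tauSigmaTau_y, AddMonoidHom.coe_coe, htaux]
  | mul a b ha hb => rw [htaumul, map_mul, mapCoeffs_mul htaumul, ha, hb, map_mul]
  | add a b ha hb => rw [map_add, map_add, mapCoeffs_add, ha, hb, map_add]

lemma tau_coeff_sigmaHat_tau (tau : H →ₗ[ℚ] H) (htauone : tau 1 = 1)
    (htaumul : ∀ a b : H, tau (a * b) = tau b * tau a)
    (htaux : tau x = y) (htauy : tau y = x) (v : H) (n : ℕ) :
    tau (coeff n (sigmaHat (tau v))) = coeff n (tauSigmaTau v) := by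
  rw [← mapCoeffs_sigmaHat_tau tau htauone htaumul htaux htauy, coeff_mapCoeffs,
    AddMonoidHom.coe_coe]

def zwords : Set H := {u | ∃ ks : List ℕ, ks ≠ [] ∧ (∀ k ∈ ks, 1 ≤ k) ∧ zword ks = u}

lemma x_mul_zword_cons {k : ℕ} (hk : 1 ≤ k) (ks : List ℕ) :
    x * zword (k :: ks) = zword ((k + 1) :: ks) := by
  simp only [zword, List.map_cons, List.prod_cons, zk, ← mul_assoc, ← pow_succ']
  congr 3
  omega

lemma y_mul_zword (ks : List ℕ) : y * zword ks = zword (1 :: ks) := by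
  simp [zword, zk]

lemma x_mul_mem_zwords {u : H} (hu : u ∈ zwords) : x * u ∈ zwords := by
  obtain ⟨_ | ⟨k, ks⟩, hne, hks, rfl⟩ := hu
  · exact absurd rfl hne
  refine ⟨(k + 1) :: ks, List.cons_ne_nil _ _, ?_, (x_mul_zword_cons (hks k (by simp)) ks).symm⟩
  simp only [List.mem_cons, forall_eq_or_imp] at hks ⊢
  exact ⟨by omega, hks.2⟩

lemma y_mul_mem_zwords {u : H} (hu : u ∈ zwords) : y * u ∈ zwords := by
  obtain ⟨ks, -, hks, rfl⟩ := hu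
  exact ⟨1 :: ks, List.cons_ne_nil _ _, by simpa using hks, (y_mul_zword ks).symm⟩

lemma mul_mem_span_zwords (a : H) {u : H} (hu : u ∈ Submodule.span ℚ zwords) :
    a * u ∈ Submodule.span ℚ zwords := by
  have of_mul_mem : ∀ b : H, (∀ u ∈ zwords, b * u ∈ zwords) →
      Submodule.span ℚ zwords ≤ (Submodule.span ℚ zwords).comap (LinearMap.mulLeft ℚ b) :=
    fun b hb => Submodule.span_le.mpr fun u hu => Submodule.subset_span (hb u hu)
  induction a using H.induction generalizing u with
  | algebraMap r => simpa [← Algebra.smul_def] using Submodule.smul_mem _ r hu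
  | of_x => exact of_mul_mem x (fun _ => x_mul_mem_zwords) hu
  | of_y => exact of_mul_mem y (fun _ => y_mul_mem_zwords) hu
  | mul a b ha hb => rw [mul_assoc]; exact ha (hb hu)
  | add a b ha hb => rw [add_mul]; exact add_mem (ha hu) (hb hu)

lemma mul_y_mem_span_zwords (v : H) : v * y ∈ Submodule.span ℚ zwords :=
  mul_mem_span_zwords v (Submodule.subset_span ⟨[1], by simp, by simp, by simp [zword, zk]⟩)

lemma zword_eq_prod_ofFn (ks : List ℕ) :
    zword ks = (List.ofFn fun i : Fin ks.length => zk (ks.get i)).prod := by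
  rw [zword, ← List.ofFn_getElem_eq_map]
  rfl

lemma coeff_sigmaHat_zk {k : ℕ} (hk : 1 ≤ k) (n : ℕ) : coeff n (sigmaHat (zk k)) = zk (k + n) := by
  rw [zk, map_mul, map_pow, sigmaHat_x, sigmaHat_y, ← map_pow, ← mul_assoc, coeff_mul_C,
    coeff_C_mul, geomSeries, coeff_mk, ← pow_add, zk]
  congr 2
  omega

lemma coeff_sigmaHat_zword {ks : List ℕ} (hks : ∀ k ∈ ks, 1 ≤ k) (n : ℕ) :
    coeff n (sigmaHat (zword ks))
      = ∑ e ∈ antidiagonalTuple ks.length n, zword (addE ks e) := by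
  rw [zword_eq_prod_ofFn, map_list_prod, List.map_ofFn, coeff_prod_ofFn]
  refine Finset.sum_congr rfl fun e _ => ?_
  simp only [Function.comp_apply, coeff_sigmaHat_zk (hks _ (List.get_mem _ _)), addE, zword,
    List.map_ofFn]
  rfl

lemma sigmaM_eq_coeff_sigmaHat (m : ℕ) (sigmaM : H →ₗ[ℚ] H)
    (hsigmaM : ∀ ks : List ℕ, ks ≠ [] → (∀ k ∈ ks, 1 ≤ k) →
      sigmaM (zword ks) = ∑ e ∈ antidiagonalTuple ks.length m, zword (addE ks e))
    {u : H} (hu : u ∈ Submodule.span ℚ zwords) :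
    sigmaM u = coeff m (sigmaHat u) := by
  refine LinearMap.eqOn_span' (g := ((coeff m).restrictScalars ℚ).comp sigmaHat.toLinearMap)
    ?_ hu
  rintro _ ⟨ks, hne, hks, rfl⟩
  simp [hsigmaM ks hne hks, coeff_sigmaHat_zword hks]

lemma tauSigmaTau_x_mul_mul_y (v : H) :
    tauSigmaTau (x * v * y) = C x * (alphaSigmaAlpha v * geomSeries y) * C y := by
  rw [map_mul, map_mul, tauSigmaTau_x, tauSigmaTau_y, mul_assoc (C x), geomSeries_y_mul_tauSigmaTau]

lemma alphaHom_coeff_sigmaHat_mul_geomSeries (v : H) (m : ℕ) :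
    alphaHom (coeff m (sigmaHat (alphaHom v) * geomSeries x))
      = coeff m (alphaSigmaAlpha v * geomSeries y) := by
  calc alphaHom (coeff m (sigmaHat (alphaHom v) * geomSeries x))
      = coeff m (map (alphaHom : H →+* H) (sigmaHat (alphaHom v) * geomSeries x)) :=
        (coeff_map _ _ _).symm
    _ = coeff m (alphaSigmaAlpha v * geomSeries y) := by
      rw [map_mul, map_alphaHom_sigmaHat_alphaHom, map_geomSeries, RingHom.coe_coe, alphaHom_x]

/-- The operator identity `(σ_m − τσ_mτ) L_x = L_x (σ_m − α̃σ_mα̃)` on `𝔥y`, which is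
the content of the equivalence between the derivation relations and the Ohno type
relations. -/
theorem sigma_operator_identity
    (m : ℕ)
    (tau : H →ₗ[ℚ] H) (htauone : tau 1 = 1)
    (htaumul : ∀ a b : H, tau (a * b) = tau b * tau a)
    (htaux : tau x = y) (htauy : tau y = x)
    (alphaTilde : H →ₗ[ℚ] H)
    (halphaTilde : ∀ u : H, alphaTilde (u * y) = alphaHom u * y)
    (sigmaM : H →ₗ[ℚ] H)
    (hsigmaM : ∀ ks : List ℕ, ks ≠ [] → (∀ k ∈ ks, 1 ≤ k) →
      sigmaM (zword ks)
        = ∑ e ∈ Finset.Nat.antidiagonalTuple ks.length m, zword (addE ks e))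
    (w : H) (v : H) (hw : w = v * y) :
    sigmaM (x * w) - tau (sigmaM (tau (x * w)))
      = x * (sigmaM w - alphaTilde (sigmaM (alphaTilde w))) := by
  subst hw
  have hσ (u : H) : sigmaM (u * y) = coeff m (sigmaHat (u * y)) :=
    sigmaM_eq_coeff_sigmaHat m sigmaM hsigmaM (mul_y_mem_span_zwords u)
  set c := coeff m (alphaSigmaAlpha v * geomSeries y)
  have hσx : sigmaM (x * (v * y)) = x * sigmaM (v * y) := by
    rw [← mul_assoc, hσ, hσ, mul_assoc, map_mul, sigmaHat_x, coeff_C_mul]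
  have hτ : tau (sigmaM (tau (x * (v * y)))) = x * c * y := by
    have hτx : tau (x * (v * y)) = tau (v * y) * y := by rw [htaumul, htaux]
    rw [hτx, hσ, ← hτx, tau_coeff_sigmaHat_tau tau htauone htaumul htaux htauy, ← mul_assoc,
      tauSigmaTau_x_mul_mul_y, coeff_mul_C, coeff_C_mul]
  have hα : alphaTilde (sigmaM (alphaTilde (v * y))) = c * y := by
    rw [halphaTilde, hσ, map_mul, sigmaHat_y, ← mul_assoc, coeff_mul_C, halphaTilde,
      alphaHom_coeff_sigmaHat_mul_geomSeries]
  rw [hσx, hτ, hα, mul_sub, mul_assoc]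

end FMZVNote
end
end

section
/- (Another type of the derivation relation for finite multiple zeta values, 𝒜-version.) For every integer l ≥ 1 and every element w of 𝔥y, one has Z_𝒜(x^{l-1}y·w + δ_l(w)) = 0; equivalently, Z_𝒜(L_z^{-1}δ_l L_z(w)) = 0, where L_z denotes left multiplication by z = x+y. -/
noncomputable section

namespace FMZVNote

/-- The ideal `⊕_p ℤ/pℤ` of finitely supported elements of `∏_p ℤ/pℤ`. -/
def finSupportIdeal : Ideal (∀ p : Nat.Primes, ZMod p) where
  carrier := {f | {p : Nat.Primes | f p ≠ 0}.Finite}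
  zero_mem' := by simp
  add_mem' := by
    intro a b ha hb
    refine (ha.union hb).subset ?_
    intro p hp
    simp only [Set.mem_setOf_eq, Set.mem_union]
    by_contra h
    push_neg at h
    exact hp (by simp [h.1, h.2])
  smul_mem' := by
    intro c f hf
    refine hf.subset ?_
    intro p hp
    simp only [Set.mem_setOf_eq] at hp ⊢
    intro h
    exact hp (by simp [h])

/-- The ring `𝒜 = (∏_p ℤ/pℤ)/(⊕_p ℤ/pℤ)`, where `p` runs over all primes. -/
abbrev Acal : Type := (∀ p : Nat.Primes, ZMod p) ⧸ finSupportIdeal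

theorem Acal.isUnit_intCast (n : ℤ) (hn : n ≠ 0) : IsUnit ((n : ℤ) : Acal) := by
  refine IsUnit.of_mul_eq_one
    (Ideal.Quotient.mk finSupportIdeal fun p => ((n : ZMod p))⁻¹) ?_
  have h1 : ((n : ℤ) : Acal)
      = Ideal.Quotient.mk finSupportIdeal (fun p => ((n : ZMod p))) := by
    rw [← map_intCast (Ideal.Quotient.mk finSupportIdeal) n]
    rfl
  rw [h1, ← map_mul, ← map_one (Ideal.Quotient.mk finSupportIdeal), Ideal.Quotient.eq]
  have hfin : {p : Nat.Primes | ((n : ZMod (p : ℕ))) = 0}.Finite := by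
    have hsub : {p : Nat.Primes | ((n : ZMod (p : ℕ))) = 0} ⊆
        (fun p : Nat.Primes => (p : ℕ)) ⁻¹' (Set.Iic n.natAbs) := by
      intro p hp
      simp only [Set.mem_setOf_eq] at hp
      haveI : NeZero (p : ℕ) := ⟨p.2.ne_zero⟩
      rw [ZMod.intCast_zmod_eq_zero_iff_dvd] at hp
      have hd : (p : ℕ) ∣ n.natAbs := by
        have := Int.natAbs_dvd_natAbs.mpr hp
        simpa using this
      exact Nat.le_of_dvd (Int.natAbs_pos.mpr hn) hd
    exact ((Set.finite_Iic _).preimage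
      (fun a _ b _ h => Subtype.ext h)).subset hsub
  refine hfin.subset ?_
  intro p hp
  simp only [Set.mem_setOf_eq] at hp ⊢
  by_contra h
  apply hp
  haveI : Fact (p : ℕ).Prime := ⟨p.2⟩
  simp [mul_inv_cancel₀ h]

/-- Every nonzero integer is invertible in `𝒜`, so `𝒜` is a `ℚ`-algebra. -/
instance : Algebra ℚ Acal :=
  (IsLocalization.lift (M := nonZeroDivisors ℤ) (S := ℚ)
    (g := Int.castRingHom Acal)
    (fun v => Acal.isUnit_intCast v.1 (nonZeroDivisors.ne_zero v.2))).toAlgebra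

instance : Module ℚ Acal := Algebra.toModule

/-- The finite multiple zeta value `ζ_𝒜(k_1,…,k_r)`, the class in `𝒜` of the tuple
`(Σ_{p>n_1>⋯>n_r≥1} 1/(n_1^{k_1}⋯n_r^{k_r}) mod p)_p`. -/
def zetaA (k : List ℕ) : Acal :=
  Ideal.Quotient.mk finSupportIdeal fun p =>
    ∑ n : Fin k.length → Fin p,
      if (∀ i, 0 < (n i : ℕ)) ∧
          (∀ i j : Fin k.length, i < j → (n j : ℕ) < (n i : ℕ)) then
        ∏ i, ((((n i : ℕ) : ZMod p)) ^ k.get i)⁻¹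
      else 0

/-!
For a word `w = z_{k_1} ⋯ z_{k_r}` one has `δ_l(z_k) = z_{k+l} + z_k z_l`, and the Leibniz rule
turns `z_l w + δ_l(w)` into the harmonic (stuffle) product `z_l ∗ w`. The truncated multiple
harmonic sums `S_N` are multiplicative for `∗` at every level `N`: passing from `N` to `N + 1`
adds on both sides exactly the terms with `n_1 = N`. Hence `Z_𝒜(z_l w + δ_l(w)) = ζ_𝒜(l) ζ_𝒜(w)`,
and `ζ_𝒜(l) = 0` because `Σ_{a ∈ 𝔽_p^×} a^{-l} = Σ_{a ∈ 𝔽_p^×} a^l = 0` once `l < p - 1`.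
Every element of `𝔥y` is a linear combination of nonempty words, which finishes the proof.
-/

open Finset

/-- The index lists of the terms of the harmonic product `z_l ∗ z_{k_1} ⋯ z_{k_r}`. -/
def stuffleSingleton (l : ℕ) : List ℕ → List (List ℕ)
  | [] => [[l]]
  | k :: ks => (l :: k :: ks) :: ((k + l) :: ks) :: (stuffleSingleton l ks).map (k :: ·)

theorem stuffleSingleton_pos {l : ℕ} (hl : 1 ≤ l) {ks : List ℕ} (hks : ∀ k ∈ ks, 1 ≤ k) :
    ∀ t ∈ stuffleSingleton l ks, ∀ k ∈ t, 1 ≤ k := by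
  induction ks with
  | nil => simpa [stuffleSingleton] using hl
  | cons k ks ih =>
    simp only [List.mem_cons, forall_eq_or_imp] at hks
    simp only [stuffleSingleton, List.mem_cons, List.mem_map, forall_eq_or_imp]
    refine ⟨⟨hl, hks⟩, ⟨by omega, hks.2⟩, ?_⟩
    rintro _ ⟨t, ht, rfl⟩
    simpa [hks.1] using ih hks.2 t ht

section MultipleHarmonicSum

variable (K : Type*) [Field K]

/-- `S_N(k_1, …, k_r) = Σ_{N > n_1 > ⋯ > n_r ≥ 1} 1 / (n_1^{k_1} ⋯ n_r^{k_r})`. -/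
def multipleHarmonicSum : List ℕ → ℕ → K
  | [], _ => 1
  | k :: ks, N => ∑ n ∈ Ico 1 N, ((n : K) ^ k)⁻¹ * multipleHarmonicSum ks n

variable {K}

@[simp]
theorem multipleHarmonicSum_nil (N : ℕ) : multipleHarmonicSum K [] N = 1 := rfl

theorem multipleHarmonicSum_cons (k : ℕ) (ks : List ℕ) (N : ℕ) :
    multipleHarmonicSum K (k :: ks) N =
      ∑ n ∈ Ico 1 N, ((n : K) ^ k)⁻¹ * multipleHarmonicSum K ks n := rfl

theorem multipleHarmonicSum_cons_of_le_one (k : ℕ) (ks : List ℕ) {N : ℕ} (hN : N ≤ 1) :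
    multipleHarmonicSum K (k :: ks) N = 0 := by
  rw [multipleHarmonicSum_cons, Ico_eq_empty_of_le hN, sum_empty]

theorem multipleHarmonicSum_cons_succ (k : ℕ) (ks : List ℕ) {N : ℕ} (hN : 1 ≤ N) :
    multipleHarmonicSum K (k :: ks) (N + 1) =
      multipleHarmonicSum K (k :: ks) N + ((N : K) ^ k)⁻¹ * multipleHarmonicSum K ks N := by
  simp only [multipleHarmonicSum_cons, sum_Ico_succ_top hN]

theorem sum_map_multipleHarmonicSum_stuffleSingleton (l : ℕ) (ks : List ℕ) (N : ℕ) :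
    ((stuffleSingleton l ks).map (multipleHarmonicSum K · N)).sum =
      multipleHarmonicSum K [l] N * multipleHarmonicSum K ks N := by
  induction N generalizing ks with
  | zero =>
    cases ks <;> simp [stuffleSingleton, Function.comp_def, multipleHarmonicSum_cons_of_le_one]
  | succ N ih =>
    rcases Nat.eq_zero_or_pos N with rfl | hN
    · cases ks <;> simp [stuffleSingleton, Function.comp_def, multipleHarmonicSum_cons_of_le_one]
    cases ks with
    | nil => simp [stuffleSingleton]
    | cons k ks =>
      have ih_cons := ih (k :: ks)
      simp only [stuffleSingleton, List.map_cons, List.sum_cons, List.map_map,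
        Function.comp_def] at ih_cons ⊢
      simp only [multipleHarmonicSum_cons_succ _ _ hN, List.sum_map_add, List.sum_map_mul_left,
        ih ks, multipleHarmonicSum_nil, mul_one]
      rw [pow_add, mul_inv]
      linear_combination ih_cons

end MultipleHarmonicSum

theorem ZMod.sum_eq_sum_range {M : Type*} [AddCommMonoid M] (p : ℕ) [NeZero p]
    (f : ZMod p → M) : ∑ a : ZMod p, f a = ∑ n ∈ range p, f n :=
  sum_nbij' ZMod.val (↑) (fun a _ => by simpa using ZMod.val_lt a) (by simp) (by simp)
    (fun n hn => ZMod.val_cast_of_lt (by simpa using hn)) (by simp)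

theorem multipleHarmonicSum_singleton_zmod_eq_zero {p l : ℕ} [Fact p.Prime] (hl : 0 < l)
    (hlp : l < p - 1) : multipleHarmonicSum (ZMod p) [l] p = 0 := by
  calc multipleHarmonicSum (ZMod p) [l] p = ∑ n ∈ range p, ((n : ZMod p) ^ l)⁻¹ := by
        rw [multipleHarmonicSum_cons, range_eq_Ico,
          sum_eq_sum_Ico_succ_bot (Fact.out : p.Prime).pos]
        simp [hl.ne']
    _ = ∑ a : ZMod p, (a⁻¹) ^ l := by simp [ZMod.sum_eq_sum_range]
    _ = ∑ a : ZMod p, a ^ l := Equiv.sum_comp (Equiv.inv (ZMod p)) (· ^ l)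
    _ = 0 := FiniteField.sum_pow_lt_card_sub_one (K := ZMod p) l (by rwa [ZMod.card])

def IsDecreasingBelow (N : ℕ) {r : ℕ} (n : Fin r → ℕ) : Prop :=
  StrictAnti n ∧ ∀ i, 0 < n i ∧ n i < N

theorem isDecreasingBelow_cons_iff {N m r : ℕ} {g : Fin r → ℕ} :
    IsDecreasingBelow N (Fin.cons m g : Fin (r + 1) → ℕ) ↔
      (0 < m ∧ m < N) ∧ IsDecreasingBelow m g := by
  simp only [IsDecreasingBelow, Fin.forall_fin_succ, Fin.cons_zero, Fin.cons_succ]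
  constructor
  · rintro ⟨hanti, hm, hg⟩
    refine ⟨hm, fun i j hij => ?_, fun i => ⟨(hg i).1, ?_⟩⟩
    · simpa using hanti (Fin.succ_lt_succ_iff.2 hij)
    · simpa using hanti (Fin.succ_pos i)
  · rintro ⟨hm, hanti, hg⟩
    refine ⟨fun i j hij => ?_, hm, fun i => ⟨(hg i).1, (hg i).2.trans hm.2⟩⟩
    cases i using Fin.cases <;> cases j using Fin.cases
    · exact absurd hij (lt_irrefl 0)
    · simpa using (hg _).2
    · exact absurd hij (by simp)
    · simpa using hanti (Fin.succ_lt_succ_iff.1 hij)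

theorem Fin.sum_pi_eq_sum_sum_cons {M α : Type*} [AddCommMonoid M] [Fintype α] {r : ℕ}
    (f : (Fin (r + 1) → α) → M) :
    ∑ n, f n = ∑ a, ∑ g : Fin r → α, f (Fin.cons a g) := by
  rw [← (Fin.consEquiv fun _ => α).sum_comp, Fintype.sum_prod_type]
  rfl

open Classical in
theorem sum_tuples_eq_multipleHarmonicSum (K : Type*) [Field K] (p : ℕ) (ks : List ℕ) {N : ℕ}
    (hN : N ≤ p) :
    ∑ n : Fin ks.length → Fin p,
        (if IsDecreasingBelow N (fun i => (n i : ℕ))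
          then ∏ i, (((n i : ℕ) : K) ^ ks.get i)⁻¹ else 0) =
      multipleHarmonicSum K ks N := by
  induction ks generalizing N with
  | nil => simp [IsDecreasingBelow, multipleHarmonicSum, StrictAnti]
  | cons k ks ih =>
    have hsummand (m : Fin p) (g : Fin ks.length → Fin p) :
        (if IsDecreasingBelow N (fun i => ((Fin.cons m g : Fin (ks.length + 1) → Fin p) i : ℕ))
          then ∏ i : Fin (ks.length + 1),
            ((((Fin.cons m g : Fin (ks.length + 1) → Fin p) i : ℕ) : K) ^ (k :: ks).get i)⁻¹
          else 0) =
        if 0 < (m : ℕ) ∧ (m : ℕ) < N then ((m : K) ^ k)⁻¹ *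
          (if IsDecreasingBelow m (fun i => (g i : ℕ))
            then ∏ i, (((g i : ℕ) : K) ^ ks.get i)⁻¹ else 0) else 0 := by
      rw [← Function.comp_def Fin.val, Fin.comp_cons, isDecreasingBelow_cons_iff,
        Function.comp_def, Fin.prod_univ_succ]
      split_ifs <;> simp_all
    calc _ = ∑ m : Fin p, if 0 < (m : ℕ) ∧ (m : ℕ) < N
            then ((m : K) ^ k)⁻¹ * multipleHarmonicSum K ks m else 0 := by
          refine (Fin.sum_pi_eq_sum_sum_cons (r := ks.length) _).trans (sum_congr rfl fun m _ => ?_)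
          refine (sum_congr rfl fun g _ => hsummand m g).trans ?_
          by_cases hm : 0 < (m : ℕ) ∧ (m : ℕ) < N
          · simp only [hm, and_self, if_true, ← ih m.isLt.le, mul_sum]
          · simp [hm]
      _ = ∑ n ∈ range p, if 0 < n ∧ n < N
            then ((n : K) ^ k)⁻¹ * multipleHarmonicSum K ks n else 0 :=
          Fin.sum_univ_eq_sum_range (fun n => if 0 < n ∧ n < N
            then ((n : K) ^ k)⁻¹ * multipleHarmonicSum K ks n else 0) p
      _ = multipleHarmonicSum K (k :: ks) N := by
          rw [← sum_filter]
          refine sum_congr ?_ fun _ _ => rfl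
          ext n
          simp only [mem_filter, mem_range, mem_Ico]
          omega

section ZetaA

local instance factPrime (p : Nat.Primes) : Fact (p : ℕ).Prime := ⟨p.2⟩

theorem zetaA_eq_mk (ks : List ℕ) :
    zetaA ks = Ideal.Quotient.mk finSupportIdeal
      fun p => multipleHarmonicSum (ZMod p) ks p := by
  classical
  unfold zetaA
  congr 1
  funext p
  rw [← sum_tuples_eq_multipleHarmonicSum (ZMod p) p ks le_rfl]
  refine sum_congr rfl fun n _ => if_congr ?_ rfl rfl
  exact ⟨fun h => ⟨fun i j hij => h.2 i j hij, fun i => ⟨h.1 i, (n i).isLt⟩⟩,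
    fun h => ⟨fun i => (h.2 i).1, fun i j hij => h.1 hij⟩⟩

theorem zetaA_singleton_eq_zero {l : ℕ} (hl : 0 < l) : zetaA [l] = 0 := by
  rw [zetaA_eq_mk, Ideal.Quotient.eq_zero_iff_mem]
  refine ((Set.finite_le_nat (l + 1)).preimage Subtype.val_injective.injOn).subset
    fun (p : Nat.Primes) hp => ?_
  by_contra hlp
  have hlp' : ¬(p : ℕ) ≤ l + 1 := hlp
  exact hp (multipleHarmonicSum_singleton_zmod_eq_zero hl (by omega))

theorem sum_map_zetaA_stuffleSingleton (l : ℕ) (ks : List ℕ) :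
    ((stuffleSingleton l ks).map zetaA).sum = zetaA [l] * zetaA ks := by
  have hmap : (stuffleSingleton l ks).map zetaA =
      ((stuffleSingleton l ks).map fun t (p : Nat.Primes) => multipleHarmonicSum (ZMod p) t p).map
        (Ideal.Quotient.mk finSupportIdeal) := by
    simp [zetaA_eq_mk, List.map_map, Function.comp_def]
  rw [hmap, ← map_list_sum, zetaA_eq_mk, zetaA_eq_mk, ← map_mul]
  congr 1
  funext p
  rw [Pi.list_sum_apply, List.map_map]
  exact sum_map_multipleHarmonicSum_stuffleSingleton l ks p

end ZetaA

theorem map_one_eq_zero_of_leibniz {A : Type*} [Ring A] {D : A → A}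
    (hD : ∀ a b, D (a * b) = D a * b + a * D b) : D 1 = 0 := by
  simpa using hD 1 1

theorem map_pow_eq_zero_of_leibniz {A : Type*} [Ring A] {D : A → A}
    (hD : ∀ a b, D (a * b) = D a * b + a * D b) {a : A} (ha : D a = 0) (n : ℕ) :
    D (a ^ n) = 0 := by
  induction n with
  | zero => simpa using map_one_eq_zero_of_leibniz hD
  | succ n ih => rw [pow_succ, hD, ih, ha, zero_mul, mul_zero, add_zero]

theorem zword_cons (k : ℕ) (ks : List ℕ) : zword (k :: ks) = zk k * zword ks := by
  simp [zword]

structure IsDeltaDerivation (l : ℕ) (D : H → H) : Prop where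
  leibniz : ∀ a b, D (a * b) = D a * b + a * D b
  map_x : D x = 0
  map_y : D y = z * x ^ (l - 1) * y

namespace IsDeltaDerivation

variable {l : ℕ} {D : H → H}

theorem map_zk (hD : IsDeltaDerivation l D) (hl : 1 ≤ l) {k : ℕ} (hk : 1 ≤ k) :
    D (zk k) = zk (k + l) + zk k * zk l := by
  have hpow : x ^ (k - 1) * (x * x ^ (l - 1)) = x ^ (k + l - 1) := by
    rw [← pow_succ', ← pow_add]
    congr 1
    omega
  rw [zk, hD.leibniz, map_pow_eq_zero_of_leibniz hD.leibniz hD.map_x, zero_mul, zero_add,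
    hD.map_y]
  simp only [z, zk]
  rw [← hpow]
  noncomm_ring

theorem zk_mul_add_map_zword (hD : IsDeltaDerivation l D) (hl : 1 ≤ l) {ks : List ℕ}
    (hks : ∀ k ∈ ks, 1 ≤ k) :
    zk l * zword ks + D (zword ks) = ((stuffleSingleton l ks).map zword).sum := by
  induction ks with
  | nil => simp [stuffleSingleton, zword, map_one_eq_zero_of_leibniz hD.leibniz]
  | cons k ks ih =>
    simp only [List.mem_cons, forall_eq_or_imp] at hks
    simp only [stuffleSingleton, List.map_cons, List.sum_cons, List.map_map,
      Function.comp_def, zword_cons, List.sum_map_mul_left, ← ih hks.2, hD.leibniz,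
      hD.map_zk hl hks.1]
    noncomm_ring

end IsDeltaDerivation

/-- Nonempty words only: `x` times a nonempty word is again a word, whereas `x · 1` is not. -/
def wordSpan : Submodule ℚ H :=
  Submodule.span ℚ {w | ∃ ks : List ℕ, ks ≠ [] ∧ (∀ k ∈ ks, 1 ≤ k) ∧ zword ks = w}

theorem zword_mem_wordSpan {ks : List ℕ} (hne : ks ≠ []) (hks : ∀ k ∈ ks, 1 ≤ k) :
    zword ks ∈ wordSpan :=
  Submodule.subset_span ⟨ks, hne, hks, rfl⟩

theorem mul_mem_wordSpan_of_forall_zword {a : H}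
    (h : ∀ ks : List ℕ, ks ≠ [] → (∀ k ∈ ks, 1 ≤ k) → a * zword ks ∈ wordSpan)
    {w : H} (hw : w ∈ wordSpan) : a * w ∈ wordSpan :=
  (Submodule.span_le (p := wordSpan.comap (LinearMap.mulLeft ℚ a)) |>.2
    (by rintro _ ⟨ks, hne, hks, rfl⟩; exact h ks hne hks)) hw

theorem mul_mem_wordSpan (a : H) {w : H} (hw : w ∈ wordSpan) : a * w ∈ wordSpan := by
  induction a using FreeAlgebra.induction generalizing w with
  | grade0 r => simpa [← Algebra.smul_def] using wordSpan.smul_mem r hw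
  | grade1 i =>
    refine mul_mem_wordSpan_of_forall_zword (fun ks hne hks => ?_) hw
    fin_cases i
    · obtain ⟨k, ks, rfl⟩ := List.exists_cons_of_ne_nil hne
      simp only [List.mem_cons, forall_eq_or_imp] at hks
      have hxzk : x * zk k = zk (k + 1) := by
        rw [zk, zk, ← mul_assoc, ← pow_succ', Nat.sub_add_cancel hks.1, Nat.add_sub_cancel]
      show x * zword (k :: ks) ∈ wordSpan
      rw [zword_cons, ← mul_assoc, hxzk, ← zword_cons]
      exact zword_mem_wordSpan (List.cons_ne_nil _ _) (by simpa using hks.2)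
    · show y * zword ks ∈ wordSpan
      rw [show y = zk 1 by simp [zk], ← zword_cons]
      exact zword_mem_wordSpan (List.cons_ne_nil _ _) (by simpa using hks)
  | mul a b iha ihb => simpa [mul_assoc] using iha (ihb hw)
  | add a b iha ihb => simpa [add_mul] using add_mem (iha hw) (ihb hw)

theorem map_zk_mul_add_map_zword_eq_zero {l : ℕ} (hl : 1 ≤ l) (Z : H →ₗ[ℚ] Acal)
    (hZ : ∀ ks : List ℕ, (∀ k ∈ ks, 1 ≤ k) → Z (zword ks) = zetaA ks) {D : H → H}
    (hD : IsDeltaDerivation l D) {ks : List ℕ} (hks : ∀ k ∈ ks, 1 ≤ k) :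
    Z (zk l * zword ks + D (zword ks)) = 0 := by
  rw [hD.zk_mul_add_map_zword hl hks, map_list_sum, List.map_map]
  calc ((stuffleSingleton l ks).map (Z ∘ zword)).sum
      = ((stuffleSingleton l ks).map zetaA).sum :=
        congrArg List.sum <| List.map_congr_left fun t ht =>
          hZ t (stuffleSingleton_pos hl hks t ht)
    _ = 0 := by rw [sum_map_zetaA_stuffleSingleton, zetaA_singleton_eq_zero hl, zero_mul]

theorem another_derivation_relation_fmzv_A_general
    (l : ℕ) (hl : 1 ≤ l)
    (Z : H →ₗ[ℚ] Acal)
    (hZ : ∀ ks : List ℕ, (∀ k ∈ ks, 1 ≤ k) → Z (zword ks) = zetaA ks)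
    (D : H →ₗ[ℚ] H)
    (hDleibniz : ∀ a b : H, D (a * b) = D a * b + a * D b)
    (hDx : D x = 0) (hDy : D y = z * x ^ (l - 1) * y)
    (w : H) (v : H) (hw : w = v * y) :
    Z (x ^ (l - 1) * y * w + D w) = 0 := by
  have hD : IsDeltaDerivation l D := ⟨hDleibniz, hDx, hDy⟩
  have hker : wordSpan ≤ LinearMap.ker (Z ∘ₗ (LinearMap.mulLeft ℚ (zk l) + D)) :=
    Submodule.span_le.2 <| by
      rintro _ ⟨ks, -, hks, rfl⟩
      exact map_zk_mul_add_map_zword_eq_zero hl Z hZ hD hks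
  have hy : y ∈ wordSpan := by
    simpa [zword, zk] using zword_mem_wordSpan (ks := [1]) (by simp) (by simp)
  subst hw
  exact hker (mul_mem_wordSpan v hy)

/-- **Another type of the derivation relation for finite multiple zeta values**,
`𝒜`-version.  For every `l ≥ 1` and every `w ∈ 𝔥y`, one has
`Z_𝒜(x^{l-1}y·w + δ_l(w)) = 0`, i.e. `Z_𝒜(L_z⁻¹ δ_l L_z (w)) = 0`. -/
theorem another_derivation_relation_fmzv_A
    (l : ℕ) (hl : 1 ≤ l)
    (Z : H →ₗ[ℚ] Acal) (hZone : Z 1 = 1)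
    (hZ : ∀ ks : List ℕ, (∀ k ∈ ks, 1 ≤ k) → Z (zword ks) = zetaA ks)
    (D : H →ₗ[ℚ] H)
    (hDleibniz : ∀ a b : H, D (a * b) = D a * b + a * D b)
    (hDx : D x = 0) (hDy : D y = z * x ^ (l - 1) * y)
    (w : H) (v : H) (hw : w = v * y) :
    Z (x ^ (l - 1) * y * w + D w) = 0 :=
  another_derivation_relation_fmzv_A_general l hl Z hZ D hDleibniz hDx hDy w v hw

end FMZVNote
end
end

section
/- For every integer l ≥ 1, the derivations ∂_l and −φ ∘ δ_l ∘ φ on 𝔥 coincide: for every w ∈ 𝔥, ∂_l(w) = −φ(δ_l(φ(w))). -/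
noncomputable section

namespace FMZVNote

/-- The automorphism `φ` of `𝔥` with `φ(x) = x + y` and `φ(y) = -y`. -/
def phiHom : H →ₐ[ℚ] H := FreeAlgebra.lift ℚ ![x + y, -y]

lemma phiHom_x : phiHom x = x + y := by
  simp [phiHom, x, FreeAlgebra.lift_ι_apply]

lemma phiHom_y : phiHom y = -y := by
  simp [phiHom, y, FreeAlgebra.lift_ι_apply]

lemma phiHom_z : phiHom z = x := by
  simp [z, map_add, phiHom_x, phiHom_y]

lemma phiHom_phiHom (w : H) : phiHom (phiHom w) = w := by
  induction w using FreeAlgebra.induction with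
  | grade0 r => simp
  | grade1 i =>
      fin_cases i
      · show phiHom (phiHom x) = x
        rw [phiHom_x, map_add, phiHom_x, phiHom_y]
        abel
      · show phiHom (phiHom y) = y
        rw [phiHom_y, map_neg, phiHom_y, neg_neg]
  | mul a b ha hb => rw [map_mul, map_mul, ha, hb]
  | add a b ha hb => rw [map_add, map_add, ha, hb]

/-- For every `l ≥ 1`, the derivations `∂_l` and `−φ ∘ δ_l ∘ φ` on `𝔥` coincide. -/
theorem partial_eq_neg_phi_delta_phi
    (l : ℕ) (hl : 1 ≤ l)
    (D : H →ₗ[ℚ] H)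
    (hDleibniz : ∀ a b : H, D (a * b) = D a * b + a * D b)
    (hDx : D x = x * z ^ (l - 1) * y) (hDy : D y = -(x * z ^ (l - 1) * y))
    (Dd : H →ₗ[ℚ] H)
    (hDdleibniz : ∀ a b : H, Dd (a * b) = Dd a * b + a * Dd b)
    (hDdx : Dd x = 0) (hDdy : Dd y = z * x ^ (l - 1) * y)
    (w : H) :
    D w = -phiHom (Dd (phiHom w)) := by
  have hD1 : D 1 = 0 := by
    have h := hDleibniz 1 1
    simp only [mul_one, one_mul] at h
    exact (add_left_cancel (a := D 1) (by rw [add_zero]; exact h)).symm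
  have hDd1 : Dd 1 = 0 := by
    have h := hDdleibniz 1 1
    simp only [mul_one, one_mul] at h
    exact (add_left_cancel (a := Dd 1) (by rw [add_zero]; exact h)).symm
  have key : phiHom (z * x ^ (l - 1) * y) = -(x * z ^ (l - 1) * y) := by
    rw [map_mul, map_mul, map_pow, phiHom_z, phiHom_y, phiHom_x]
    rw [show (x + y : H) = z from rfl]
    rw [mul_neg]
  induction w using FreeAlgebra.induction with
  | grade0 r =>
      have : (algebraMap ℚ H) r = r • (1 : H) := by
        rw [Algebra.smul_def, mul_one]
      rw [this]
      simp [map_smul, hD1, hDd1]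
  | grade1 i =>
      fin_cases i
      · show D x = -phiHom (Dd (phiHom x))
        rw [phiHom_x, map_add, hDdx, hDdy, zero_add, key, neg_neg, hDx]
      · show D y = -phiHom (Dd (phiHom y))
        rw [phiHom_y, map_neg, hDdy, map_neg, neg_neg, key, hDy]
  | mul a b ha hb =>
      rw [hDleibniz, map_mul, hDdleibniz, map_add, map_mul, map_mul,
        phiHom_phiHom, phiHom_phiHom, ha, hb, neg_add, neg_mul, mul_neg]
  | add a b ha hb =>
      rw [map_add, map_add, map_add, ha, hb, map_add, neg_add]


end FMZVNote
end
end

section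
/- (Kaneko–Zagier; shuffle–reversal relation for 𝒜-finite multiple zeta values.) For all words w = z_{k_1}⋯z_{k_r} and w' = z_{k'_1}⋯z_{k'_s} in 𝔥¹, one has Z_𝒜(w ш w') = (−1)^{k_1+⋯+k_r} Z_𝒜(z_{k_r}⋯z_{k_1}z_{k'_1}⋯z_{k'_s}), where k_1+⋯+k_r is the total degree of w in x and y. -/
noncomputable section

namespace FMZVNote

/-- A word in the letters `x` (= `0`) and `y` (= `1`), as an element of `𝔥`. -/
def lword (w : List (Fin 2)) : H := (w.map (FreeAlgebra.ι ℚ)).prod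

/-- The shuffle product of two words in the letters `x`, `y`, determined by
`1 ш w = w ш 1 = w` and `au ш bv = a(u ш bv) + b(au ш v)`. -/
def shprod : List (Fin 2) → List (Fin 2) → H
  | [], w => lword w
  | a :: u, [] => lword (a :: u)
  | a :: u, b :: v =>
      FreeAlgebra.ι ℚ a * shprod u (b :: v) + FreeAlgebra.ι ℚ b * shprod (a :: u) v
  termination_by u v => u.length + v.length

/-- The list of letters (`0 = x`, `1 = y`) of the word `z_{k_1}⋯z_{k_r}`. -/
def zletters (ks : List ℕ) : List (Fin 2) :=
  (ks.map fun k => List.replicate (k - 1) 0 ++ [1]).flatten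

/-!
Fix a prime `p`. To a word `w = z_{k₁}⋯z_{k_r}` attach the multiple polylogarithm
`Li_w(t) = Σ_{n₁>⋯>n_r≥1} t^{n₁}/(n₁^{k₁}⋯n_r^{k_r})` with coefficients in `𝔽_p`; the
`p`-component of `ζ_𝒜(k₁,…,k_r)` is the sum of its coefficients of index `< p`. The Euler
operator `t d/dt` is a derivation and sends `Li_{aw}` to `L_a ⋅ Li_w`, where `L_x = 1` and
`L_y = t/(1-t)`; so induction along the shuffle recursion gives
`Σ_{w ∈ u ш v} Li_w ≡ Li_u ⋅ Li_v mod t^p`. Summing the coefficients of `Li_u ⋅ Li_v` below `p`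
gives `Σ_{i<p} [tⁱ]Li_u ⋅ ζ_{<p-i}(v)`, where `ζ_{<N}` is the multiple harmonic sum over
`N > n₁ > ⋯`. The substitution `i ↦ p - i`, under which `i^{-k} ↦ (-1)^k i^{-k}`, then moves
the letters `z_{k₁}, z_{k₂}, …` of `u` one at a time to the front of `v`, each with the sign
`(-1)^{k_j}`.
-/

section Words

variable {α : Type*}

def shuffles : List α → List α → List (List α)
  | [], w => [w]
  | a :: u, [] => [a :: u]
  | a :: u, b :: v => (shuffles u (b :: v)).map (a :: ·) ++ (shuffles (a :: u) v).map (b :: ·)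
  termination_by u v => u.length + v.length

theorem length_of_mem_shuffles {u v w : List α} (hw : w ∈ shuffles u v) :
    w.length = u.length + v.length := by
  induction u, v using shuffles.induct generalizing w with
  | case1 v => simp_all [shuffles]
  | case2 a u => simp_all [shuffles]
  | case3 a u b v ih₁ ih₂ =>
    simp only [shuffles, List.mem_append, List.mem_map] at hw
    rcases hw with ⟨w, hw, rfl⟩ | ⟨w, hw, rfl⟩
    · simp only [List.length_cons, ih₁ hw]; omega
    · simp only [List.length_cons, ih₂ hw]; omega

theorem ne_nil_of_mem_shuffles {u v w : List α} (hw : w ∈ shuffles u v)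
    (h : 0 < u.length + v.length) : w ≠ [] :=
  List.ne_nil_of_length_pos (by rwa [length_of_mem_shuffles hw])

theorem getLast?_of_mem_shuffles {u v w : List α} {c : α} (hw : w ∈ shuffles u v)
    (hc : w.getLast? = some c) : u.getLast? = some c ∨ v.getLast? = some c := by
  induction u, v using shuffles.induct generalizing w with
  | case1 v => simp_all [shuffles]
  | case2 a u => simp_all [shuffles]
  | case3 a u b v ih₁ ih₂ =>
    simp only [shuffles, List.mem_append, List.mem_map] at hw
    rcases hw with ⟨w, hw, rfl⟩ | ⟨w, hw, rfl⟩ <;>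
      rw [List.getLast?_cons_of_ne_nil (ne_nil_of_mem_shuffles hw (by simp))] at hc
    · exact (ih₁ hw hc).imp_left List.mem_getLast?_cons
    · exact (ih₂ hw hc).imp_right List.mem_getLast?_cons

end Words

theorem lword_cons (a : Fin 2) (w : List (Fin 2)) :
    lword (a :: w) = FreeAlgebra.ι ℚ a * lword w := by
  simp [lword]

theorem shprod_eq_sum_shuffles (u v : List (Fin 2)) :
    shprod u v = ((shuffles u v).map lword).sum := by
  induction u, v using shuffles.induct with
  | case1 v => simp [shprod, shuffles]
  | case2 a u => simp [shprod, shuffles]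
  | case3 a u b v ih₁ ih₂ =>
    simp [shprod, shuffles, ih₁, ih₂, lword_cons, List.sum_map_mul_left, Function.comp_def]

theorem zletters_cons (k : ℕ) (ks : List ℕ) :
    zletters (k :: ks) = List.replicate (k - 1) 0 ++ 1 :: zletters ks := by
  simp [zletters]

theorem zword_eq_lword (ks : List ℕ) : zword ks = lword (zletters ks) := by
  induction ks with
  | nil => rfl
  | cons k ks ih =>
    rw [zword, List.map_cons, List.prod_cons, ← zword, ih, zletters_cons, lword, lword,
      List.map_append, List.prod_append, List.map_cons, List.prod_cons]
    simp [zk, x, y, mul_assoc]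

theorem getLast?_zletters_ne (ks : List ℕ) : (zletters ks).getLast? ≠ some 0 := by
  induction ks with
  | nil => simp [zletters]
  | cons k ks ih =>
    rw [zletters_cons, List.getLast?_append, List.getLast?_cons]
    cases h : (zletters ks).getLast? <;> simp_all

theorem exists_zletters_eq {w : List (Fin 2)} (hw : w.getLast? ≠ some 0) :
    ∃ ks, (∀ k ∈ ks, 1 ≤ k) ∧ zletters ks = w := by
  induction w with
  | nil => exact ⟨[], by simp, rfl⟩
  | cons a w ih =>
    have hw₀ : w.getLast? ≠ some 0 := by
      rcases eq_or_ne w [] with rfl | hw'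
      · simp
      · rwa [List.getLast?_cons_of_ne_nil hw'] at hw
    obtain ⟨ks, hks, rfl⟩ := ih hw₀
    fin_cases a
    · obtain ⟨k, ks, rfl⟩ : ∃ k ks', ks = k :: ks' := by
        cases ks with
        | nil => simp [zletters] at hw
        | cons k ks => exact ⟨k, ks, rfl⟩
      obtain ⟨j, rfl⟩ := Nat.exists_eq_add_of_le' (hks k (by simp))
      refine ⟨(j + 2) :: ks, by simp_all, ?_⟩
      simp [zletters_cons, List.replicate_succ]
    · exact ⟨1 :: ks, by simp_all, by simp [zletters_cons]⟩

open Finset PowerSeries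

section TruncatedSeries

variable {R : Type*}

def eulerOp [CommSemiring R] (f : R⟦X⟧) : R⟦X⟧ := X * d⁄dX R f

theorem coeff_eulerOp [CommSemiring R] (f : R⟦X⟧) (n : ℕ) :
    coeff n (eulerOp f) = n * coeff n f := by
  cases n with
  | zero => simp [eulerOp]
  | succ n => rw [eulerOp, coeff_succ_X_mul, coeff_derivative, mul_comm, Nat.cast_succ]

theorem eulerOp_add [CommSemiring R] (f g : R⟦X⟧) : eulerOp (f + g) = eulerOp f + eulerOp g := by
  rw [eulerOp, map_add, mul_add, eulerOp, eulerOp]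

theorem eulerOp_mul [CommSemiring R] (f g : R⟦X⟧) :
    eulerOp (f * g) = f * eulerOp g + g * eulerOp f := by
  rw [eulerOp, eulerOp, eulerOp, Derivation.leibniz, smul_eq_mul, smul_eq_mul]
  ring

theorem mk_span_X_pow_eq_iff [CommRing R] {N : ℕ} {f g : R⟦X⟧} :
    Ideal.Quotient.mk (Ideal.span {X ^ N}) f = Ideal.Quotient.mk (Ideal.span {X ^ N}) g ↔
      ∀ m < N, coeff m f = coeff m g := by
  simp [Ideal.Quotient.eq, Ideal.mem_span_singleton, X_pow_dvd_iff, sub_eq_zero]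

def letterSeries [Semiring R] (a : Fin 2) : R⟦X⟧ :=
  if a = 0 then 1 else mk fun n => if n = 0 then 0 else 1

theorem coeff_letterSeries_mul [CommSemiring R] (a : Fin 2) (f : R⟦X⟧) (n : ℕ) :
    coeff n (letterSeries a * f) = if a = 0 then coeff n f else ∑ m ∈ range n, coeff m f := by
  split_ifs with ha
  · simp [letterSeries, ha]
  · rw [letterSeries, if_neg ha, mul_comm, coeff_mul, Finset.Nat.sum_antidiagonal_eq_sum_range_succ
      (fun i j => coeff i f * coeff j (mk fun n => if n = 0 then (0 : R) else 1)),
      Finset.sum_range_succ]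
    simp only [coeff_mk, Nat.sub_eq_zero_iff_le, Nat.sub_self, if_true, mul_zero, add_zero]
    exact Finset.sum_congr rfl fun m hm => by simp [(mem_range.1 hm).not_ge]

theorem constantCoeff_letterSeries_one [Semiring R] :
    constantCoeff (letterSeries 1 : R⟦X⟧) = 0 := by
  simp [letterSeries, ← coeff_zero_eq_constantCoeff_apply]

end TruncatedSeries

theorem natCast_ne_zero_of_lt {p n : ℕ} (h₀ : 0 < n) (h : n < p) : (n : ZMod p) ≠ 0 := by
  rw [Ne, ZMod.natCast_eq_zero_iff]
  exact fun hd => (Nat.le_of_dvd h₀ hd).not_gt h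

section Polylog

variable (p : ℕ)

/- `Li_w` mod `p`, through `t d/dt Li_{aw} = L_a ⋅ Li_w` with `L_a = letterSeries a`. For `p ∣ n`
the factor `(n : ZMod p)⁻¹` is the junk value `0`, so only the coefficients below `p` carry
information. -/
def polylog : List (Fin 2) → (ZMod p)⟦X⟧
  | [] => 1
  | a :: w => mk fun n => (n : ZMod p)⁻¹ * coeff n (letterSeries a * polylog w)

theorem coeff_polylog_cons (a : Fin 2) (w : List (Fin 2)) (n : ℕ) :
    coeff n (polylog p (a :: w)) = (n : ZMod p)⁻¹ * coeff n (letterSeries a * polylog p w) := by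
  simp [polylog]

theorem constantCoeff_polylog_cons (a : Fin 2) (w : List (Fin 2)) :
    constantCoeff (polylog p (a :: w)) = 0 := by
  rw [← coeff_zero_eq_constantCoeff_apply, coeff_polylog_cons, Nat.cast_zero, ZMod.inv_zero,
    zero_mul]

variable {p} [Fact p.Prime]

local notation "π" => Ideal.Quotient.mk (Ideal.span {(X : (ZMod p)⟦X⟧) ^ p})

theorem mk_eq_mk_of_mk_eulerOp_eq {f g : (ZMod p)⟦X⟧} (h₀ : constantCoeff f = constantCoeff g)
    (h : π (eulerOp f) = π (eulerOp g)) : π f = π g := by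
  rw [mk_span_X_pow_eq_iff] at h ⊢
  intro m hm
  rcases Nat.eq_zero_or_pos m with rfl | hm₀
  · simpa using h₀
  · have := h m hm
    rw [coeff_eulerOp, coeff_eulerOp] at this
    exact mul_left_cancel₀ (natCast_ne_zero_of_lt hm₀ hm) this

theorem mk_eulerOp_polylog_cons {a : Fin 2} {w : List (Fin 2)} (hw : a = 0 → w ≠ []) :
    π (eulerOp (polylog p (a :: w))) = π (letterSeries a * polylog p w) := by
  rw [mk_span_X_pow_eq_iff]
  intro m hm
  rw [coeff_eulerOp, coeff_polylog_cons, ← mul_assoc]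
  rcases Nat.eq_zero_or_pos m with rfl | hm₀
  · have : constantCoeff (letterSeries a * polylog p w) = 0 := by
      rw [map_mul]
      by_cases ha : a = 0
      · obtain ⟨b, w, rfl⟩ := List.exists_cons_of_ne_nil (hw ha)
        rw [constantCoeff_polylog_cons, mul_zero]
      · rw [show a = 1 by omega, constantCoeff_letterSeries_one, zero_mul]
    rw [coeff_zero_eq_constantCoeff_apply, this, mul_zero]
  · rw [mul_inv_cancel₀ (natCast_ne_zero_of_lt hm₀ hm), one_mul]

theorem mk_eulerOp_sum_polylog_cons (a : Fin 2) {L : List (List (Fin 2))}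
    (hL : ∀ w ∈ L, w ≠ []) :
    π (eulerOp (L.map fun w => polylog p (a :: w)).sum) =
      π (letterSeries a) * π (L.map (polylog p)).sum := by
  induction L with
  | nil => simp [eulerOp]
  | cons w L ih =>
    simp only [List.map_cons, List.sum_cons, eulerOp_add, map_add]
    rw [mk_eulerOp_polylog_cons fun _ => hL w (by simp), ih fun w hw => hL w (by simp [hw]),
      map_mul, mul_add]

theorem mk_sum_polylog_shuffles {u v : List (Fin 2)} (hu : u.getLast? ≠ some 0)
    (hv : v.getLast? ≠ some 0) :
    π ((shuffles u v).map (polylog p)).sum = π (polylog p u * polylog p v) := by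
  induction u, v using shuffles.induct with
  | case1 v => simp [shuffles, polylog]
  | case2 a u => simp [shuffles, polylog]
  | case3 a u b v ih₁ ih₂ =>
    have hu' : u.getLast? ≠ some 0 := fun h => hu (List.mem_getLast?_cons h)
    have hv' : v.getLast? ≠ some 0 := fun h => hv (List.mem_getLast?_cons h)
    have hau : a = 0 → u ≠ [] := by rintro rfl rfl; exact hu rfl
    have hbv : b = 0 → v ≠ [] := by rintro rfl rfl; exact hv rfl
    have leibniz (f g : (ZMod p)⟦X⟧) :
        π (eulerOp (f * g)) = π f * π (eulerOp g) + π g * π (eulerOp f) := by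
      rw [eulerOp_mul, map_add, map_mul, map_mul]
    rw [shuffles, List.map_append, List.sum_append, List.map_map, List.map_map]
    apply mk_eq_mk_of_mk_eulerOp_eq
    · simp [map_list_sum, Function.comp_def, constantCoeff_polylog_cons]
    · rw [Function.comp_def, Function.comp_def, eulerOp_add, map_add,
        mk_eulerOp_sum_polylog_cons a fun w hw => ne_nil_of_mem_shuffles hw (by simp),
        mk_eulerOp_sum_polylog_cons b fun w hw => ne_nil_of_mem_shuffles hw (by simp),
        ih₁ hu' hv, ih₂ hu hv', leibniz, mk_eulerOp_polylog_cons hau, mk_eulerOp_polylog_cons hbv]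
      simp only [map_mul]
      ring

end Polylog

section NestedSum

variable {R : Type*} [CommSemiring R]

def nestedSum (f : ℕ → ℕ → R) : List ℕ → ℕ → R
  | [], _ => 1
  | k :: ks, N => ∑ m ∈ range N, f k m * nestedSum f ks m

theorem strictAnti_cons_and_lt_iff {r P M : ℕ} (m : Fin P) (g : Fin r → Fin P) :
    ((∀ i j, i < j →
        ((Fin.cons m g : Fin (r + 1) → Fin P) j : ℕ) < (Fin.cons m g : Fin (r + 1) → Fin P) i) ∧
        ∀ i, ((Fin.cons m g : Fin (r + 1) → Fin P) i : ℕ) < M) ↔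
      (m : ℕ) < M ∧ (∀ i j, i < j → (g j : ℕ) < g i) ∧ ∀ i, (g i : ℕ) < m := by
  simp only [Fin.forall_fin_succ, Fin.cons_zero, Fin.cons_succ, Fin.succ_lt_succ_iff,
    Fin.succ_pos, false_imp_iff, forall_const, true_and, not_lt_zero]
  exact ⟨fun ⟨⟨h₁, h₂⟩, h₃, _⟩ => ⟨h₃, h₂, h₁⟩,
    fun ⟨h₃, h₂, h₁⟩ => ⟨⟨h₁, h₂⟩, h₃, fun i => (h₁ i).trans h₃⟩⟩

theorem sum_strictAnti_eq_nestedSum (f : ℕ → ℕ → R) (ks : List ℕ) {P M : ℕ} (hM : M ≤ P) :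
    ∑ n : Fin ks.length → Fin P,
        (if (∀ i j, i < j → (n j : ℕ) < n i) ∧ ∀ i, (n i : ℕ) < M then
          ∏ i, f (ks.get i) (n i) else 0) =
      nestedSum f ks M := by
  induction ks generalizing M with
  | nil => simp [nestedSum]
  | cons k ks ih =>
    show ∑ n : Fin (ks.length + 1) → Fin P, (if (∀ i j, i < j → (n j : ℕ) < n i) ∧
      ∀ i, (n i : ℕ) < M then ∏ i, f ((k :: ks).get i) (n i) else 0) = _
    rw [← (Fin.consEquiv fun _ => Fin P).sum_comp, Fintype.sum_prod_type]
    calc _ = ∑ m : Fin P, if (m : ℕ) < M then f k m * nestedSum f ks m else 0 := by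
          refine Fintype.sum_congr _ _ fun m => ?_
          simp only [Fin.consEquiv_apply, strictAnti_cons_and_lt_iff]
          split_ifs with hm
          · rw [← ih m.isLt.le, Finset.mul_sum]
            refine Fintype.sum_congr _ _ fun g => ?_
            simp only [hm, true_and, mul_ite, mul_zero]
            congr 1
            exact Fin.prod_univ_succ (n := ks.length) _
          · simp [hm]
      _ = ∑ m ∈ range P, if m < M then f k m * nestedSum f ks m else 0 :=
          Fin.sum_univ_eq_sum_range (fun m => if m < M then f k m * nestedSum f ks m else 0) P
      _ = nestedSum f (k :: ks) M := by
          rw [← Finset.sum_filter, nestedSum]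
          congr 1
          ext m
          simp only [mem_filter, mem_range]
          omega

end NestedSum

section FiniteSums

/- Since `(0 : ZMod p)⁻¹ = 0`, `invPow p k 0 = 0` for `k ≥ 1`: sums weighted by `invPow` over
`range N` tacitly start at `1`, which is how `nestedSum (invPow p) ks N` matches the
`n_r ≥ 1` of `ζ_𝒜`. -/
def invPow (p k m : ℕ) : ZMod p := ((m : ZMod p) ^ k)⁻¹

theorem invPow_zero {p k : ℕ} (hk : 1 ≤ k) : invPow p k 0 = 0 := by
  rw [invPow, Nat.cast_zero, zero_pow (Nat.one_le_iff_ne_zero.mp hk), ZMod.inv_zero]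

variable {p : ℕ} [Fact p.Prime]

theorem invPow_sub {k i : ℕ} (hi : i ≤ p) : invPow p k (p - i) = (-1) ^ k * invPow p k i := by
  rw [invPow, invPow, Nat.cast_sub hi, ZMod.natCast_self, zero_sub, neg_pow, mul_inv, ← inv_pow,
    inv_neg, inv_one]

theorem coeff_polylog_replicate_zero_append (j : ℕ) (w : List (Fin 2)) (n : ℕ) :
    coeff n (polylog p (List.replicate j 0 ++ w)) = invPow p j n * coeff n (polylog p w) := by
  induction j with
  | zero => simp [invPow]
  | succ j ih =>
    rw [List.replicate_succ, List.cons_append, coeff_polylog_cons, coeff_letterSeries_mul,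
      if_pos rfl, ih, invPow, invPow, pow_succ, mul_inv, mul_left_comm, mul_assoc]

theorem coeff_polylog_zletters_cons {k : ℕ} (hk : 1 ≤ k) (ks : List ℕ) (n : ℕ) :
    coeff n (polylog p (zletters (k :: ks))) =
      invPow p k n * ∑ m ∈ range n, coeff m (polylog p (zletters ks)) := by
  rw [zletters_cons, coeff_polylog_replicate_zero_append, coeff_polylog_cons,
    coeff_letterSeries_mul, if_neg one_ne_zero, ← mul_assoc, invPow, invPow, ← mul_inv,
    ← pow_succ, Nat.sub_add_cancel hk]

theorem sum_coeff_polylog_zletters {ks : List ℕ} (hks : ∀ k ∈ ks, 1 ≤ k) {N : ℕ} (hN : 1 ≤ N) :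
    ∑ n ∈ range N, coeff n (polylog p (zletters ks)) = nestedSum (invPow p) ks N := by
  induction ks generalizing N with
  | nil =>
    simp [zletters, polylog, nestedSum, coeff_one, Finset.sum_ite_eq', Nat.one_le_iff_ne_zero.mp hN]
  | cons k ks ih =>
    have hk := hks k (by simp)
    rw [nestedSum]
    refine Finset.sum_congr rfl fun n hn => ?_
    rw [coeff_polylog_zletters_cons hk]
    rcases Nat.eq_zero_or_pos n with rfl | hn₀
    · rw [invPow_zero hk, zero_mul, zero_mul]
    · rw [ih (fun k hk => hks k (by simp [hk])) hn₀]

theorem sum_range_sub_eq_of_eq {M : Type*} [AddCommMonoid M] [IsRightCancelAdd M] (F : ℕ → M)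
    {N : ℕ} (h : F 0 = F N) : ∑ i ∈ range N, F (N - i) = ∑ i ∈ range N, F i := by
  have := Finset.sum_range_reflect F (N + 1)
  rw [sum_range_succ, sum_range_succ, Nat.add_sub_cancel, Nat.sub_self, h] at this
  exact add_right_cancel this

theorem sum_coeff_polylog_zletters_mul_nestedSum {ks : List ℕ} (hks : ∀ k ∈ ks, 1 ≤ k)
    (ls : List ℕ) :
    ∑ i ∈ range p, coeff i (polylog p (zletters ks)) * nestedSum (invPow p) ls (p - i) =
      (-1) ^ ks.sum * nestedSum (invPow p) (ks.reverse ++ ls) p := by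
  induction ks generalizing ls with
  | nil => simp [zletters, polylog, coeff_one, Finset.sum_ite_eq', (Fact.out : p.Prime).pos]
  | cons k ks ih =>
    have hk := hks k (by simp)
    set c : ℕ → ZMod p := fun m => coeff m (polylog p (zletters ks))
    calc _ = ∑ i ∈ range p,
            invPow p k i * (∑ m ∈ range i, c m) * nestedSum (invPow p) ls (p - i) := by
          simp only [coeff_polylog_zletters_cons hk, c]
      _ = ∑ j ∈ range p, (-1) ^ k * (invPow p k j * nestedSum (invPow p) ls j) *
            ∑ m ∈ range (p - j), c m := by
          rw [← sum_range_sub_eq_of_eq (N := p)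
            (fun i => invPow p k i * (∑ m ∈ range i, c m) * nestedSum (invPow p) ls (p - i))]
          · refine sum_congr rfl fun j hj => ?_
            have hj := (mem_range.1 hj).le
            rw [Nat.sub_sub_self hj, invPow_sub hj]
            ring
          · simp [invPow, Nat.one_le_iff_ne_zero.mp hk]
      _ = (-1) ^ k * ∑ m ∈ range p, c m * nestedSum (invPow p) (k :: ls) (p - m) := by
          simp only [nestedSum, Finset.mul_sum]
          rw [Finset.sum_comm' (t' := range p) (s' := fun m => range (p - m))
            (by intro j m; simp only [mem_range]; omega)]
          exact sum_congr rfl fun m _ => sum_congr rfl fun j _ => by ring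
      _ = _ := by
          rw [ih (fun k hk => hks k (by simp [hk])), List.sum_cons, List.reverse_cons,
            List.append_assoc, List.singleton_append, pow_add]
          ring

end FiniteSums

theorem sum_coeff_polylog_shuffles_zletters {p : ℕ} [Fact p.Prime] {ks ls : List ℕ}
    (hks : ∀ k ∈ ks, 1 ≤ k) (hls : ∀ k ∈ ls, 1 ≤ k) :
    ((shuffles (zletters ks) (zletters ls)).map
        fun w => ∑ n ∈ range p, coeff n (polylog p w)).sum =
      (-1) ^ ks.sum * nestedSum (invPow p) (ks.reverse ++ ls) p := by
  have hsh := mk_span_X_pow_eq_iff.mp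
    (mk_sum_polylog_shuffles (p := p) (getLast?_zletters_ne ks) (getLast?_zletters_ne ls))
  calc _ = ∑ n ∈ range p, coeff n ((shuffles (zletters ks) (zletters ls)).map (polylog p)).sum := by
        rw [← LinearMap.sum_apply, map_list_sum, List.map_map]
        simp only [Function.comp_def, LinearMap.sum_apply]
    _ = ∑ n ∈ range p, coeff n (polylog p (zletters ks) * polylog p (zletters ls)) :=
        sum_congr rfl fun n hn => hsh n (mem_range.1 hn)
    _ = ∑ i ∈ range p, coeff i (polylog p (zletters ks)) *
          ∑ j ∈ range (p - i), coeff j (polylog p (zletters ls)) := by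
        simp only [coeff_mul, Finset.Nat.sum_antidiagonal_eq_sum_range_succ
          (fun i j => coeff i (polylog p (zletters ks)) * coeff j (polylog p (zletters ls))),
          Nat.succ_eq_add_one]
        rw [Finset.sum_range_diag_flip p
          (fun i j => coeff i (polylog p (zletters ks)) * coeff j (polylog p (zletters ls)))]
        simp only [Finset.mul_sum]
    _ = ∑ i ∈ range p, coeff i (polylog p (zletters ks)) * nestedSum (invPow p) ls (p - i) :=
        sum_congr rfl fun i hi => by
          rw [sum_coeff_polylog_zletters hls (by have := mem_range.1 hi; omega)]
    _ = _ := sum_coeff_polylog_zletters_mul_nestedSum hks ls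

theorem zetaA_eq_mk_nestedSum {ks : List ℕ} (hks : ∀ k ∈ ks, 1 ≤ k) :
    zetaA ks = Ideal.Quotient.mk finSupportIdeal fun q => nestedSum (invPow q) ks q := by
  unfold zetaA
  congr 1
  funext q
  rw [← sum_strictAnti_eq_nestedSum _ _ le_rfl]
  refine Fintype.sum_congr _ _ fun n => ?_
  by_cases hpos : ∀ i, 0 < (n i : ℕ)
  · simp [hpos, invPow]
  · obtain ⟨i, hi⟩ := not_forall.mp hpos
    have h₀ : ∏ j, invPow q (ks.get j) (n j) = 0 := Finset.prod_eq_zero (mem_univ i) (by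
      rw [Nat.eq_zero_of_not_pos hi]
      exact invPow_zero (hks _ (List.get_mem ks i)))
    rw [if_neg fun h => hpos h.1]
    split_ifs
    exacts [h₀.symm, rfl]

theorem apply_lword_eq_mk (Z : H →ₗ[ℚ] Acal)
    (hZ : ∀ ks : List ℕ, (∀ k ∈ ks, 1 ≤ k) → Z (zword ks) = zetaA ks) {w : List (Fin 2)}
    (hw : w.getLast? ≠ some 0) :
    Z (lword w) = Ideal.Quotient.mk finSupportIdeal
      fun q => ∑ n ∈ range q, coeff n (polylog q w) := by
  obtain ⟨ks, hks, rfl⟩ := exists_zletters_eq hw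
  rw [← zword_eq_lword, hZ ks hks, zetaA_eq_mk_nestedSum hks]
  congr 1
  funext q
  have : Fact (q : ℕ).Prime := ⟨q.prop⟩
  rw [sum_coeff_polylog_zletters hks q.prop.one_le]

theorem shuffle_reversal_relation_fmzv_A_general
    (Z : H →ₗ[ℚ] Acal)
    (hZ : ∀ ks : List ℕ, (∀ k ∈ ks, 1 ≤ k) → Z (zword ks) = zetaA ks)
    (ks ls : List ℕ) (hks : ∀ k ∈ ks, 1 ≤ k) (hls : ∀ k ∈ ls, 1 ≤ k) :
    Z (shprod (zletters ks) (zletters ls))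
      = (-1 : Acal) ^ ks.sum * Z (zword (ks.reverse ++ ls)) := by
  have hrev : ∀ k ∈ ks.reverse ++ ls, 1 ≤ k := by simp_all [or_imp]
  calc Z (shprod (zletters ks) (zletters ls))
      = Ideal.Quotient.mk finSupportIdeal ((shuffles (zletters ks) (zletters ls)).map
          fun w (q : Nat.Primes) => ∑ n ∈ range q, coeff n (polylog q w)).sum := by
        rw [shprod_eq_sum_shuffles, map_list_sum, map_list_sum, List.map_map, List.map_map]
        refine congrArg List.sum (List.map_congr_left fun w hw => apply_lword_eq_mk Z hZ ?_)
        intro h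
        rcases getLast?_of_mem_shuffles hw h with h | h <;> exact getLast?_zletters_ne _ h
    _ = Ideal.Quotient.mk finSupportIdeal
          fun q => (-1) ^ ks.sum * nestedSum (invPow q) (ks.reverse ++ ls) q := by
        congr 1
        funext q
        have : Fact (q : ℕ).Prime := ⟨q.prop⟩
        rw [Pi.list_sum_apply, List.map_map]
        exact sum_coeff_polylog_shuffles_zletters hks hls
    _ = _ := by
        rw [hZ _ hrev, zetaA_eq_mk_nestedSum hrev, ← map_one (Ideal.Quotient.mk _), ← map_neg,
          ← map_pow, ← map_mul]
        rfl

/-- **Shuffle–reversal relation for `𝒜`-finite multiple zeta values** (Kaneko–Zagier).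
For all words `w = z_{k_1}⋯z_{k_r}`, `w' = z_{k'_1}⋯z_{k'_s}` in `𝔥¹`:
`Z_𝒜(w ш w') = (−1)^{k_1+⋯+k_r} Z_𝒜(z_{k_r}⋯z_{k_1}z_{k'_1}⋯z_{k'_s})`. -/
theorem shuffle_reversal_relation_fmzv_A
    (Z : H →ₗ[ℚ] Acal) (hZone : Z 1 = 1)
    (hZ : ∀ ks : List ℕ, (∀ k ∈ ks, 1 ≤ k) → Z (zword ks) = zetaA ks)
    (ks ls : List ℕ) (hks : ∀ k ∈ ks, 1 ≤ k) (hls : ∀ k ∈ ls, 1 ≤ k) :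
    Z (shprod (zletters ks) (zletters ls))
      = (-1 : Acal) ^ ks.sum * Z (zword (ks.reverse ++ ls)) :=
  shuffle_reversal_relation_fmzv_A_general Z hZ ks ls hks hls

end FMZVNote
end
end
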